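/- Let X be a metric space, (φ_t) a flow on X, and F: X → ℝ a measurable function. Suppose K ⊂ X is a nonempty invariant compact set and V ⊇ K is a subset such that F is constantly equal to c = sup_{x∈X} F(x) on K, and sup_{x ∈ X∖V} F(x) = c' < c. If μ is an invariant probability measure with finite entropy h_μ that is an equilibrium state for F (i.e., μ maximizes m ↦ h_m + ∫ F dm over invariant probability measures with finite entropy), then μ(X ∖ V) ≤ h_μ / (c − c'). -/

import Mathlib

/-!
Averaging along an orbit in `K` and taking a weak limit of the averages (Krylov–Bogolyubov, using
compactness of the space of probability measures on `K`) gives an invariant probability measure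
`ν` carried by `K`, so `∫ F dν = c`. Since `h ν ≥ 0`, the equilibrium property of `μ` gives
`c ≤ h μ + ∫ F dμ`, while splitting `∫ F dμ` over `V` and `Vᶜ` gives
`∫ F dμ ≤ c - (c - c') μ(Vᶜ)`.
-/

open Filter MeasureTheory ProbabilityTheory BoundedContinuousFunction

theorem norm_intervalIntegral_comp_add_right_sub_le {g : ℝ → ℝ} (hg : Continuous g) {M : ℝ}
    (hM : ∀ t, ‖g t‖ ≤ M) (T s : ℝ) :
    ‖(∫ t in 0..T, g (t + s)) - ∫ t in 0..T, g t‖ ≤ 2 * M * |s| := by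
  have hint : ∀ a b : ℝ, IntervalIntegrable g volume a b := fun a b => hg.intervalIntegrable a b
  have hbound : ∀ a b : ℝ, ‖∫ t in a..b, g t‖ ≤ M * |b - a| := fun a b =>
    intervalIntegral.norm_integral_le_of_norm_le_const fun t _ => hM t
  rw [intervalIntegral.integral_comp_add_right g s, zero_add,
    intervalIntegral.integral_interval_sub_interval_comm (hint _ _) (hint _ _) (hint _ _)]
  calc ‖(∫ t in s..0, g t) - ∫ t in T + s..T, g t‖
      ≤ ‖∫ t in s..0, g t‖ + ‖∫ t in T + s..T, g t‖ := norm_sub_le _ _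
    _ ≤ M * |0 - s| + M * |T - (T + s)| := add_le_add (hbound _ _) (hbound _ _)
    _ = 2 * M * |s| := by rw [zero_sub, sub_add_cancel_left, abs_neg]; ring

section OrbitAverage

variable {Y : Type*} [TopologicalSpace Y] [MeasurableSpace Y] [BorelSpace Y]

noncomputable def orbitAverage (ψ : ℝ → Y → Y) (y : Y) (T : ℝ) : Measure Y :=
  (volume[|Set.Ioc 0 T]).map (ψ · y)

variable {ψ : ℝ → Y → Y} {y : Y} {T : ℝ}

theorem isProbabilityMeasure_orbitAverage (hψ : Continuous (ψ · y)) (hT : 0 < T) :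
    IsProbabilityMeasure (orbitAverage ψ y T) := by
  have : IsProbabilityMeasure (volume[|Set.Ioc 0 T]) :=
    cond_isProbabilityMeasure_of_finite (by simpa using hT) (by simp)
  exact Measure.isProbabilityMeasure_map hψ.aemeasurable

theorem integral_orbitAverage (hψ : Continuous (ψ · y)) (hT : 0 < T) {f : Y → ℝ}
    (hf : Continuous f) :
    ∫ x, f x ∂orbitAverage ψ y T = T⁻¹ * ∫ t in 0..T, f (ψ t y) := by
  rw [orbitAverage, integral_map hψ.aemeasurable hf.aestronglyMeasurable, ProbabilityTheory.cond,
    integral_smul_measure, intervalIntegral.integral_of_le hT.le]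
  simp [hT.le]

theorem norm_integral_comp_sub_integral_orbitAverage_le
    (hψ : Continuous fun p : ℝ × Y => ψ p.1 p.2) (hadd : ∀ s t x, ψ (s + t) x = ψ s (ψ t x))
    (hT : 0 < T) (f : Y →ᵇ ℝ) (s : ℝ) :
    ‖(∫ x, f (ψ s x) ∂orbitAverage ψ y T) - ∫ x, f x ∂orbitAverage ψ y T‖ ≤
      2 * ‖f‖ * |s| / T := by
  have horbit : Continuous (ψ · y) := hψ.comp (continuous_id.prodMk continuous_const)
  have hψs : Continuous (ψ s) := hψ.comp (continuous_const.prodMk continuous_id)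
  rw [integral_orbitAverage horbit hT (f := fun x => f (ψ s x)) (f.continuous.comp hψs),
    integral_orbitAverage horbit hT f.continuous, ← mul_sub, norm_mul, norm_inv,
    Real.norm_of_nonneg hT.le, inv_mul_le_iff₀ hT, mul_div_cancel₀ _ hT.ne']
  simp only [← hadd, add_comm s]
  exact norm_intervalIntegral_comp_add_right_sub_le (f.continuous.comp horbit)
    (fun t => f.norm_coe_le_norm _) T s

end OrbitAverage

/-- The Krylov–Bogolyubov theorem. -/
theorem exists_isProbabilityMeasure_forall_map_eq {Y : Type*} [TopologicalSpace Y]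
    [TopologicalSpace.MetrizableSpace Y] [MeasurableSpace Y] [BorelSpace Y] [CompactSpace Y]
    [Nonempty Y] (ψ : ℝ → Y → Y) (hψ : Continuous fun p : ℝ × Y => ψ p.1 p.2)
    (hadd : ∀ s t x, ψ (s + t) x = ψ s (ψ t x)) :
    ∃ ν : Measure Y, IsProbabilityMeasure ν ∧ ∀ t, ν.map (ψ t) = ν := by
  obtain ⟨y⟩ := ‹Nonempty Y›
  have horbit : Continuous (ψ · y) := hψ.comp (continuous_id.prodMk continuous_const)
  let ν : ℕ → ProbabilityMeasure Y := fun n =>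
    ⟨orbitAverage ψ y (n + 1), isProbabilityMeasure_orbitAverage horbit n.cast_add_one_pos⟩
  let U : Ultrafilter ℕ := .of atTop
  obtain ⟨m, -, hm⟩ := isCompact_univ.ultrafilter_le_nhds' (U.map ν) univ_mem
  refine ⟨m, inferInstance, fun s => ?_⟩
  have hψs : Continuous (ψ s) := hψ.comp (continuous_const.prodMk continuous_id)
  refine ext_of_forall_integral_eq_of_IsFiniteMeasure fun f => ?_
  rw [integral_map hψs.aemeasurable f.continuous.aestronglyMeasurable, ← sub_eq_zero]
  have hlim := ProbabilityMeasure.tendsto_iff_forall_integral_tendsto.1 hm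
  refine tendsto_nhds_unique ((hlim (f.compContinuous ⟨ψ s, hψs⟩)).sub (hlim f)) ?_
  refine Tendsto.mono_left ?_ (Ultrafilter.of_le atTop)
  refine squeeze_zero_norm (fun n => norm_integral_comp_sub_integral_orbitAverage_le hψ hadd
    n.cast_add_one_pos f s) ?_
  simpa [Function.comp_def] using
    (tendsto_const_div_atTop_nhds_zero_nat (2 * ‖f‖ * |s|)).comp (tendsto_add_atTop_nat 1)

theorem exists_isProbabilityMeasure_forall_map_eq_measure_compl_eq_zero {X : Type*}
    [TopologicalSpace X] [TopologicalSpace.MetrizableSpace X] [MeasurableSpace X] [BorelSpace X]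
    (φ : ℝ → X → X) (hφ : Continuous fun p : ℝ × X => φ p.1 p.2)
    (hadd : ∀ s t x, φ (s + t) x = φ s (φ t x)) {K : Set X} (hKne : K.Nonempty)
    (hK : IsCompact K) (hKφ : ∀ t, Set.MapsTo (φ t) K K) :
    ∃ ν : Measure X, IsProbabilityMeasure ν ∧ (∀ t, ν.map (φ t) = ν) ∧ ν Kᶜ = 0 := by
  have : CompactSpace K := isCompact_iff_compactSpace.1 hK
  have : Nonempty K := hKne.to_subtype
  have hφt : ∀ t, Continuous (φ t) := fun t => hφ.comp (continuous_const.prodMk continuous_id)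
  let ψ : ℝ → K → K := fun t x => ⟨φ t x, hKφ t x.2⟩
  have hψ : Continuous fun p : ℝ × K => ψ p.1 p.2 :=
    (hφ.comp (continuous_fst.prodMk (continuous_subtype_val.comp continuous_snd))).subtype_mk _
  obtain ⟨ν, hν, hνψ⟩ := exists_isProbabilityMeasure_forall_map_eq ψ hψ
    fun s t x => Subtype.ext (hadd s t x)
  refine ⟨ν.map (↑), Measure.isProbabilityMeasure_map measurable_subtype_coe.aemeasurable,
    fun t => ?_, ?_⟩
  · have hψt : Continuous (ψ t) := hψ.comp (continuous_const.prodMk continuous_id)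
    calc (ν.map (↑)).map (φ t) = (ν.map (ψ t)).map (↑) := by
          rw [Measure.map_map (hφt t).measurable measurable_subtype_coe,
            Measure.map_map measurable_subtype_coe hψt.measurable]
          rfl
      _ = ν.map (↑) := by rw [hνψ t]
  · rw [Measure.map_apply measurable_subtype_coe hK.measurableSet.compl]
    simp

theorem integral_le_sub_mul_measure_compl {X : Type*} [MeasurableSpace X] {μ : Measure X}
    [IsProbabilityMeasure μ] {F : X → ℝ} (hF : Integrable F μ) {V : Set X} (hV : MeasurableSet V)
    {c c' : ℝ} (hFV : ∀ x ∈ V, F x ≤ c) (hFVc : ∀ x ∈ Vᶜ, F x ≤ c') :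
    ∫ x, F x ∂μ ≤ c - (c - c') * (μ Vᶜ).toReal := by
  have hle : ∀ s, MeasurableSet s → ∀ b, (∀ x ∈ s, F x ≤ b) → ∫ x in s, F x ∂μ ≤ μ.real s * b :=
    fun s hs b hb => (setIntegral_mono_on hF.integrableOn
      (integrableOn_const (measure_ne_top μ s)) hs hb).trans_eq
      (by rw [setIntegral_const, smul_eq_mul])
  have hVc := hle Vᶜ hV.compl c' hFVc
  rw [← integral_add_compl hV hF, ← measureReal_def]
  rw [probReal_compl_eq_one_sub hV] at hVc ⊢
  linarith [hle V hV c hFV]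

theorem stmt0_general {X : Type*} [MetricSpace X] [MeasurableSpace X] [BorelSpace X]
    (φ : ℝ → X → X) (hφcont : Continuous fun p : ℝ × X => φ p.1 p.2)
    (hφadd : ∀ s t x, φ (s + t) x = φ s (φ t x))
    (F : X → ℝ)
    (K V : Set X) (hKne : K.Nonempty) (hKcomp : IsCompact K)
    (hKinv : ∀ t, φ t '' K = K) (hVmeas : MeasurableSet V)
    (c c' : ℝ) (hc : IsLUB (Set.range F) c) (hcK : ∀ x ∈ K, F x = c)
    (hc' : IsLUB (F '' Vᶜ) c') (hlt : c' < c)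
    (h : Measure X → ℝ) (hnonneg : ∀ m, 0 ≤ h m)
    (μ : Measure X) [IsProbabilityMeasure μ]
    (hμint : Integrable F μ)
    (heq : ∀ m : Measure X, IsProbabilityMeasure m → (∀ t, Measure.map (φ t) m = m) →
      Integrable F m → h m + ∫ x, F x ∂m ≤ h μ + ∫ x, F x ∂μ) :
    (μ Vᶜ).toReal ≤ h μ / (c - c') := by
  obtain ⟨ν, hν, hνinv, hνK⟩ := exists_isProbabilityMeasure_forall_map_eq_measure_compl_eq_zero
    φ hφcont hφadd hKne hKcomp fun t => Set.mapsTo_iff_image_subset.2 (hKinv t).subset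
  have hFν : ∀ᵐ x ∂ν, F x = c := (ae_iff.2 hνK : ∀ᵐ x ∂ν, x ∈ K).mono hcK
  have hνint : Integrable F ν := (integrable_const c).congr (hFν.mono fun _ hx => hx.symm)
  have hνF : ∫ x, F x ∂ν = c := by simp [integral_congr_ae hFν]
  have hμF := integral_le_sub_mul_measure_compl hμint hVmeas (fun x _ => hc.1 ⟨x, rfl⟩)
    fun x hx => hc'.1 ⟨x, hx, rfl⟩
  rw [le_div_iff₀ (sub_pos.2 hlt)]
  linarith [heq ν hν hνinv hνint, hnonneg ν]

/-- Let `X` be a metric space, `φ` a continuous flow on `X`, and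
`F : X → ℝ` a measurable function. Suppose `K` is a nonempty invariant compact set,
`V ⊇ K`, `F ≡ c = sup F` on `K`, and `sup_{X ∖ V} F = c' < c`. If `μ` is an invariant
probability measure which is an equilibrium state for `F` (it maximizes
`m ↦ h m + ∫ F dm` over invariant probability measures, where `h` is a nonnegative
abstract entropy functional), then `μ(X ∖ V) ≤ h μ / (c - c')`. -/
theorem stmt0 {X : Type*} [MetricSpace X] [MeasurableSpace X] [BorelSpace X]
    (φ : ℝ → X → X) (hφcont : Continuous fun p : ℝ × X => φ p.1 p.2)
    (hφ0 : ∀ x, φ 0 x = x) (hφadd : ∀ s t x, φ (s + t) x = φ s (φ t x))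
    (F : X → ℝ) (hFmeas : Measurable F)
    (K V : Set X) (hKne : K.Nonempty) (hKcomp : IsCompact K)
    (hKinv : ∀ t, φ t '' K = K) (hKV : K ⊆ V) (hVmeas : MeasurableSet V)
    (c c' : ℝ) (hc : IsLUB (Set.range F) c) (hcK : ∀ x ∈ K, F x = c)
    (hc' : IsLUB (F '' Vᶜ) c') (hlt : c' < c)
    (h : Measure X → ℝ) (hnonneg : ∀ m, 0 ≤ h m)
    (μ : Measure X) [IsProbabilityMeasure μ]
    (hμinv : ∀ t, Measure.map (φ t) μ = μ) (hμint : Integrable F μ)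
    (heq : ∀ m : Measure X, IsProbabilityMeasure m → (∀ t, Measure.map (φ t) m = m) →
      Integrable F m → h m + ∫ x, F x ∂m ≤ h μ + ∫ x, F x ∂μ) :
    (μ Vᶜ).toReal ≤ h μ / (c - c') :=
  stmt0_general φ hφcont hφadd F K V hKne hKcomp hKinv hVmeas c c' hc hcK hc' hlt h hnonneg μ hμint
    heq
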